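/- Let a > 0, κ > 0, C₁ > 0, p₀ ≥ 0, p₁ ≥ 0, p₂ > 0, and let f : [0,a] → [0,1] be measurable. For integers j ≥ 0 set f̃_j := ∫₀¹ f(ar) r^{2j+1} dr, and for integers n ≥ 2 define μ_n := C₁ Σ_{m=0}^{2} p_m κ^{2m} Σ_{k=0}^{∞} (−1)^k (aκ)^{2(n+k−m)} f̃_{n+k−m} / (2^{n+k−m} ((n+k−m)!)²) · Σ_{l=0}^{⌊k/2⌋} 2^{−(n+2l)} C(k+n−m, 2l+n−m) C(2l+n, l), the series in k being absolutely convergent. Then there exist c > 0 and N ∈ ℕ such that for all n > N: c^{−1} (2n)³ f̃_{n−2} (aκe/(2n))^{2n} ≤ μ_n ≤ c (2n)³ f̃_{n−2} (aκe/(2n))^{2n}. -/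

import Mathlib

open MeasureTheory

/-- `f̃_j = ∫₀¹ f(ar) r^{2j+1} dr`. -/
noncomputable def ftilde (a : ℝ) (f : ℝ → ℝ) (j : ℕ) : ℝ :=
  ∫ r in (0:ℝ)..1, f (a * r) * r ^ (2 * j + 1)

/-- The Fourier coefficients `μ_n` of the kernel of the model operator `K`:
`μ_n = C₁ Σ_{m=0}^{2} p_m κ^{2m} Σ_{k=0}^{∞} (−1)^k (aκ)^{2(n+k−m)} f̃_{n+k−m} /
(2^{n+k−m}((n+k−m)!)²) · Σ_{l=0}^{⌊k/2⌋} 2^{−(n+2l)} C(k+n−m, 2l+n−m) C(2l+n, l)`. -/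
noncomputable def muN (a κ C₁ : ℝ) (p : Fin 3 → ℝ) (f : ℝ → ℝ) (n : ℕ) : ℝ :=
  C₁ * ∑ m : Fin 3, p m * κ ^ (2 * (m : ℕ)) *
    ∑' k : ℕ,
      ((-1 : ℝ) ^ k * (a * κ) ^ (2 * (n + k - (m : ℕ))) * ftilde a f (n + k - (m : ℕ)) /
          ((2 : ℝ) ^ (n + k - (m : ℕ)) * ((Nat.factorial (n + k - (m : ℕ)) : ℝ)) ^ 2)) *
        ∑ l ∈ Finset.range (k / 2 + 1),
          ((2 : ℝ) ^ (n + 2 * l))⁻¹ * (Nat.choose (k + n - (m : ℕ)) (2 * l + n - (m : ℕ)) : ℝ) *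
            (Nat.choose (2 * l + n) l : ℝ)


open Nat

lemma ftilde_intble (a : ℝ) (f : ℝ → ℝ) (ha : 0 < a) (hf : Measurable f)
    (hf01 : ∀ r ∈ Set.Icc (0 : ℝ) a, f r ∈ Set.Icc (0 : ℝ) 1) (j : ℕ) :
    IntervalIntegrable (fun r => f (a * r) * r ^ (2 * j + 1)) volume 0 1 := by
  rw [intervalIntegrable_iff, Set.uIoc_of_le (by norm_num : (0:ℝ) ≤ 1)]
  haveI : IsFiniteMeasure (volume.restrict (Set.Ioc (0:ℝ) 1)) :=
    ⟨by simp [Real.volume_Ioc]⟩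
  apply Integrable.mono' (integrable_const (1:ℝ))
  · exact ((hf.comp (measurable_const_mul a)).mul (measurable_id.pow_const _)).aestronglyMeasurable
  · refine (ae_restrict_iff' measurableSet_Ioc).2 (Filter.Eventually.of_forall fun r hr => ?_)
    have hr0 : 0 < r := hr.1
    have hr1 : r ≤ 1 := hr.2
    have har : a * r ∈ Set.Icc (0:ℝ) a := ⟨by positivity, by nlinarith⟩
    obtain ⟨h1, h2⟩ := hf01 _ har
    rw [Real.norm_eq_abs, abs_mul, abs_of_nonneg h1,
      abs_of_nonneg (by positivity : (0:ℝ) ≤ r ^ (2*j+1))]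
    calc f (a*r) * r ^ (2*j+1) ≤ 1 * 1 := by
          apply mul_le_mul h2 (pow_le_one₀ hr0.le hr1) (by positivity) zero_le_one
      _ = 1 := by ring

lemma ftilde_nonneg (a : ℝ) (f : ℝ → ℝ) (ha : 0 < a)
    (hf01 : ∀ r ∈ Set.Icc (0 : ℝ) a, f r ∈ Set.Icc (0 : ℝ) 1) (j : ℕ) :
    0 ≤ ftilde a f j := by
  apply intervalIntegral.integral_nonneg (by norm_num)
  intro r hr
  have har : a * r ∈ Set.Icc (0:ℝ) a := ⟨mul_nonneg ha.le hr.1, by nlinarith [hr.1, hr.2]⟩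
  exact mul_nonneg (hf01 _ har).1 (pow_nonneg hr.1 _)

lemma ftilde_anti (a : ℝ) (f : ℝ → ℝ) (ha : 0 < a) (hf : Measurable f)
    (hf01 : ∀ r ∈ Set.Icc (0 : ℝ) a, f r ∈ Set.Icc (0 : ℝ) 1) {j j' : ℕ} (h : j ≤ j') :
    ftilde a f j' ≤ ftilde a f j := by
  apply intervalIntegral.integral_mono_on (by norm_num)
    (ftilde_intble a f ha hf hf01 j') (ftilde_intble a f ha hf hf01 j)
  intro r hr
  have har : a * r ∈ Set.Icc (0:ℝ) a := ⟨mul_nonneg ha.le hr.1, by nlinarith [hr.1, hr.2]⟩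
  obtain ⟨h1, h2⟩ := hf01 _ har
  apply mul_le_mul_of_nonneg_left _ h1
  exact pow_le_pow_of_le_one hr.1 hr.2 (by omega)

lemma pow_self_le_exp_mul_factorial (K : ℕ) :
    (K:ℝ)^K ≤ Real.exp 1 ^ K * (K ! : ℝ) := by
  have h := Real.pow_div_factorial_le_exp (x := (K:ℝ)) (Nat.cast_nonneg K) K
  rw [div_le_iff₀ (by positivity)] at h
  calc (K:ℝ)^K ≤ Real.exp K * K ! := h
    _ = Real.exp 1 ^ K * K ! := by
        rw [← Real.exp_nat_mul]; norm_num

lemma fact_sq_lb1 (ν t : ℕ) :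
    (ν ! : ℝ)^2 * (((ν:ℝ)+1)^t)^2 ≤ ((ν+t)! : ℝ)^2 := by
  have h' : (ν ! : ℝ) * ((ν:ℝ)+1)^t ≤ ((ν+t)! : ℝ) := by
    exact_mod_cast Nat.factorial_mul_pow_le_factorial (m := ν) (n := t)
  calc (ν ! : ℝ)^2 * (((ν:ℝ)+1)^t)^2 = ((ν ! : ℝ) * ((ν:ℝ)+1)^t)^2 := by ring
    _ ≤ ((ν+t)! : ℝ)^2 := by
        apply pow_le_pow_left₀ (by positivity) h'

lemma fact_sq_lb2 (ν t : ℕ) :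
    (ν ! : ℝ)^2 * ((ν:ℝ)+1)^t * (t ! : ℝ) ≤ ((ν+t)! : ℝ)^2 := by
  have h1' : (ν ! : ℝ) * ((ν:ℝ)+1)^t ≤ ((ν+t)! : ℝ) := by
    exact_mod_cast Nat.factorial_mul_pow_le_factorial (m := ν) (n := t)
  have h2' : (ν ! : ℝ) * (t ! : ℝ) ≤ ((ν+t)! : ℝ) := by
    exact_mod_cast Nat.le_of_dvd (Nat.factorial_pos _)
      (Nat.factorial_mul_factorial_dvd_factorial_add ν t)
  calc (ν ! : ℝ)^2 * ((ν:ℝ)+1)^t * (t ! : ℝ)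
      = ((ν ! : ℝ) * ((ν:ℝ)+1)^t) * ((ν ! : ℝ) * (t ! : ℝ)) := by ring
    _ ≤ ((ν+t)! : ℝ) * ((ν+t)! : ℝ) :=
        mul_le_mul h1' h2' (by positivity) (by positivity)
    _ = ((ν+t)! : ℝ)^2 := by ring


lemma core (b β : ℝ) (hb : 0 < b) (hbβ : b ≤ β) (hβ : 1 ≤ β) (ν q K : ℕ) (hK : 1 ≤ K) :
    b^(K+q) * ((K:ℝ)+(ν:ℝ)+2)^K * ((K/2+1 : ℕ):ℝ) * ((ν ! : ℝ))^2 * 2^(2*ν+4)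
      ≤ 8*((K:ℝ)+2) * (Real.exp 1 * (β/((ν:ℝ)+1)))^K * (β/((ν:ℝ)+1))^q *
        (2^(ν+(K+q)) * (((ν+(K+q))! : ℝ))^2 * 2^(ν+2)) := by
  have hA1 : (1:ℝ) ≤ (ν:ℝ)+1 := by
    have : (0:ℝ) ≤ (ν:ℝ) := Nat.cast_nonneg ν
    linarith
  set t := K + q with ht
  set A : ℝ := (ν:ℝ)+1 with hA
  have hA0 : (0:ℝ) < A := by linarith
  have hβ0 : (0:ℝ) < β := by linarith
  have hKt : K ≤ t := by omega
  have h2e : (2:ℝ) ≤ Real.exp 1 := by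
    have := Real.add_one_le_exp (1:ℝ); linarith
  have hc : ((K/2+1 : ℕ):ℝ) ≤ (K:ℝ)+2 := by
    exact_mod_cast (show (K/2+1 : ℕ) ≤ K + 2 by omega)
  have hc0 : (0:ℝ) ≤ ((K/2+1 : ℕ):ℝ) := Nat.cast_nonneg _
  have he0 : (0:ℝ) < Real.exp 1 := Real.exp_pos 1
  have hεt : (Real.exp 1 * (β/A))^K * (β/A)^q = Real.exp 1 ^ K * β^t / A^t := by
    rw [mul_pow, mul_assoc, ← pow_add]
    rw [div_pow]
    ring
  have hpow2 : ((2:ℝ))^(2*ν+4) * 2^t = 4 * (2^(ν+t) * 2^(ν+2)) := by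
    rw [← pow_add, show 2*ν+4+t = (ν+t+(ν+2))+2 by ring, pow_add, pow_add]
    ring
  set X : ℝ := 2^(ν+t) * (((ν+t)! : ℝ))^2 * 2^(ν+2) with hX
  have hRform : 4*((K:ℝ)+2) * (Real.exp 1 * (β/A))^K * (β/A)^q * X
      = (4*((K:ℝ)+2) * Real.exp 1 ^ K * β^t * X) / A^t := by
    rw [mul_assoc (4*((K:ℝ)+2)), hεt]
    ring
  -- Branch A
  have branchA : b^t * (2*(ν:ℝ)+4)^K * ((K/2+1 : ℕ):ℝ) * ((ν ! : ℝ))^2 * 2^(2*ν+4)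
      ≤ 4*((K:ℝ)+2) * (Real.exp 1 * (β/A))^K * (β/A)^q * X := by
    have step1 : b^t * (2*(ν:ℝ)+4)^K * ((K/2+1 : ℕ):ℝ) * ((ν ! : ℝ))^2 * 2^(2*ν+4)
        ≤ β^t * (2^t * Real.exp 1 ^ K * A^t) * ((K:ℝ)+2) * ((ν ! : ℝ))^2 * 2^(2*ν+4) := by
      have h44 : ((2:ℝ)*(ν:ℝ)+4)^K ≤ 2^t * Real.exp 1 ^ K * A^t := by
        have e0 : ((2:ℝ)*(ν:ℝ)+4)^K ≤ (2*2*A)^K := by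
          apply pow_le_pow_left₀ (by positivity)
          rw [hA]; push_cast; linarith
        have e1 : ((2:ℝ)*2*A)^K = 2^K * 2^K * A^K := by
          rw [mul_pow, mul_pow]
        have e2 : (2:ℝ)^K * 2^K * A^K ≤ 2^t * Real.exp 1 ^ K * A^t :=
          mul_le_mul (mul_le_mul (pow_le_pow_right₀ (by norm_num) hKt)
            (pow_le_pow_left₀ (by norm_num) h2e K) (by positivity) (by positivity))
            (pow_le_pow_right₀ hA1 hKt) (by positivity) (by positivity)
        calc ((2:ℝ)*(ν:ℝ)+4)^K ≤ (2*2*A)^K := e0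
          _ = 2^K * 2^K * A^K := e1
          _ ≤ 2^t * Real.exp 1 ^ K * A^t := e2
      calc b^t * (2*(ν:ℝ)+4)^K * ((K/2+1 : ℕ):ℝ) * ((ν ! : ℝ))^2 * 2^(2*ν+4)
          = (b^t * (2*(ν:ℝ)+4)^K * ((K/2+1 : ℕ):ℝ)) * (((ν ! : ℝ))^2 * 2^(2*ν+4)) := by ring
        _ ≤ (β^t * (2^t * Real.exp 1 ^ K * A^t) * ((K:ℝ)+2)) * (((ν ! : ℝ))^2 * 2^(2*ν+4)) := by
            apply mul_le_mul_of_nonneg_right _ (by positivity)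
            exact mul_le_mul (mul_le_mul (pow_le_pow_left₀ hb.le hbβ t) h44
              (by positivity) (by positivity)) hc hc0 (by positivity)
        _ = β^t * (2^t * Real.exp 1 ^ K * A^t) * ((K:ℝ)+2) * ((ν ! : ℝ))^2 * 2^(2*ν+4) := by ring
    have step3 : β^t * (2^t * Real.exp 1 ^ K * A^t) * ((K:ℝ)+2) * ((ν ! : ℝ))^2 * 2^(2*ν+4)
        ≤ 4*((K:ℝ)+2) * (Real.exp 1 * (β/A))^K * (β/A)^q * X := by
      rw [hRform, le_div_iff₀ (by positivity)]
      have hfact := fact_sq_lb1 ν t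
      calc β^t * (2^t * Real.exp 1 ^ K * A^t) * ((K:ℝ)+2) * ((ν ! : ℝ))^2 * 2^(2*ν+4) * A^t
          = (2^(2*ν+4) * 2^t) * (Real.exp 1 ^ K * β^t * ((K:ℝ)+2)) * (((ν ! : ℝ))^2 * (A^t)^2) := by
            ring
        _ ≤ (2^(2*ν+4) * 2^t) * (Real.exp 1 ^ K * β^t * ((K:ℝ)+2)) * (((ν+t)! : ℝ))^2 := by
            apply mul_le_mul_of_nonneg_left _ (by positivity)
            rw [hA] at *
            exact hfact
        _ = 4*((K:ℝ)+2) * Real.exp 1 ^ K * β^t * X := by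
            rw [hpow2, hX]; ring
    exact step1.trans step3
  -- Branch B
  have branchB : b^t * (2*(K:ℝ))^K * ((K/2+1 : ℕ):ℝ) * ((ν ! : ℝ))^2 * 2^(2*ν+4)
      ≤ 4*((K:ℝ)+2) * (Real.exp 1 * (β/A))^K * (β/A)^q * X := by
    have h2K : ((2:ℝ)*(K:ℝ))^K ≤ 2^t * (Real.exp 1 ^ K * (t ! : ℝ)) := by
      rw [mul_pow]
      have h1 : (K:ℝ)^K ≤ Real.exp 1 ^ K * (K ! : ℝ) := pow_self_le_exp_mul_factorial K
      have h2 : Real.exp 1 ^ K * (K ! : ℝ) ≤ Real.exp 1 ^ K * (t ! : ℝ) := by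
        apply mul_le_mul_of_nonneg_left _ (by positivity)
        exact_mod_cast Nat.factorial_le hKt
      exact mul_le_mul (pow_le_pow_right₀ (by norm_num) hKt) (h1.trans h2)
        (by positivity) (by positivity)
    have step1 : b^t * (2*(K:ℝ))^K * ((K/2+1 : ℕ):ℝ) * ((ν ! : ℝ))^2 * 2^(2*ν+4)
        ≤ β^t * (2^t * (Real.exp 1 ^ K * (t ! : ℝ))) * ((K:ℝ)+2) * ((ν ! : ℝ))^2 * 2^(2*ν+4) := by
      calc b^t * (2*(K:ℝ))^K * ((K/2+1 : ℕ):ℝ) * ((ν ! : ℝ))^2 * 2^(2*ν+4)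
          = (b^t * (2*(K:ℝ))^K * ((K/2+1 : ℕ):ℝ)) * (((ν ! : ℝ))^2 * 2^(2*ν+4)) := by ring
        _ ≤ (β^t * (2^t * (Real.exp 1 ^ K * (t ! : ℝ))) * ((K:ℝ)+2)) * (((ν ! : ℝ))^2 * 2^(2*ν+4)) := by
            apply mul_le_mul_of_nonneg_right _ (by positivity)
            exact mul_le_mul (mul_le_mul (pow_le_pow_left₀ hb.le hbβ t) h2K
              (by positivity) (by positivity)) hc hc0 (by positivity)
        _ = β^t * (2^t * (Real.exp 1 ^ K * (t ! : ℝ))) * ((K:ℝ)+2) * ((ν ! : ℝ))^2 * 2^(2*ν+4) := by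
            ring
    have step3 : β^t * (2^t * (Real.exp 1 ^ K * (t ! : ℝ))) * ((K:ℝ)+2) * ((ν ! : ℝ))^2 * 2^(2*ν+4)
        ≤ 4*((K:ℝ)+2) * (Real.exp 1 * (β/A))^K * (β/A)^q * X := by
      rw [hRform, le_div_iff₀ (by positivity)]
      have hfact := fact_sq_lb2 ν t
      calc β^t * (2^t * (Real.exp 1 ^ K * (t ! : ℝ))) * ((K:ℝ)+2) * ((ν ! : ℝ))^2 * 2^(2*ν+4) * A^t
          = (2^(2*ν+4) * 2^t) * (Real.exp 1 ^ K * β^t * ((K:ℝ)+2)) * (((ν ! : ℝ))^2 * A^t * (t ! : ℝ)) := by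
            ring
        _ ≤ (2^(2*ν+4) * 2^t) * (Real.exp 1 ^ K * β^t * ((K:ℝ)+2)) * (((ν+t)! : ℝ))^2 := by
            apply mul_le_mul_of_nonneg_left _ (by positivity)
            rw [hA] at *
            exact hfact
        _ = 4*((K:ℝ)+2) * Real.exp 1 ^ K * β^t * X := by
            rw [hpow2, hX]; ring
    exact step1.trans step3
  -- combine
  have hsplit : ((K:ℝ)+(ν:ℝ)+2)^K ≤ (2*(ν:ℝ)+4)^K + (2*(K:ℝ))^K := by
    rcases le_total (K:ℝ) ((ν:ℝ)+2) with h | h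
    · have h1 : ((K:ℝ)+(ν:ℝ)+2)^K ≤ (2*(ν:ℝ)+4)^K :=
        pow_le_pow_left₀ (by positivity) (by linarith) K
      have h2 : (0:ℝ) ≤ (2*(K:ℝ))^K := by positivity
      linarith
    · have h1 : ((K:ℝ)+(ν:ℝ)+2)^K ≤ (2*(K:ℝ))^K :=
        pow_le_pow_left₀ (by positivity) (by linarith) K
      have h2 : (0:ℝ) ≤ (2*(ν:ℝ)+4)^K := by positivity
      linarith
  calc b^t * ((K:ℝ)+(ν:ℝ)+2)^K * ((K/2+1 : ℕ):ℝ) * ((ν ! : ℝ))^2 * 2^(2*ν+4)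
      ≤ b^t * ((2*(ν:ℝ)+4)^K + (2*(K:ℝ))^K) * ((K/2+1 : ℕ):ℝ) * ((ν ! : ℝ))^2 * 2^(2*ν+4) := by
        apply mul_le_mul_of_nonneg_right _ (by positivity)
        apply mul_le_mul_of_nonneg_right _ (by positivity)
        apply mul_le_mul_of_nonneg_right _ hc0
        apply mul_le_mul_of_nonneg_left hsplit (by positivity)
    _ = b^t * (2*(ν:ℝ)+4)^K * ((K/2+1 : ℕ):ℝ) * ((ν ! : ℝ))^2 * 2^(2*ν+4)
        + b^t * (2*(K:ℝ))^K * ((K/2+1 : ℕ):ℝ) * ((ν ! : ℝ))^2 * 2^(2*ν+4) := by ring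
    _ ≤ 4*((K:ℝ)+2) * (Real.exp 1 * (β/A))^K * (β/A)^q * X
        + 4*((K:ℝ)+2) * (Real.exp 1 * (β/A))^K * (β/A)^q * X := _root_.add_le_add branchA branchB
    _ = 8*((K:ℝ)+2) * (Real.exp 1 * (β/A))^K * (β/A)^q * X := by ring

noncomputable def trm (a κ : ℝ) (f : ℝ → ℝ) (n m k : ℕ) : ℝ :=
  ((-1 : ℝ) ^ k * (a * κ) ^ (2 * (n + k - m)) * ftilde a f (n + k - m) /
      ((2 : ℝ) ^ (n + k - m) * ((Nat.factorial (n + k - m) : ℝ)) ^ 2)) *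
    ∑ l ∈ Finset.range (k / 2 + 1),
      ((2 : ℝ) ^ (n + 2 * l))⁻¹ * (Nat.choose (k + n - m) (2 * l + n - m) : ℝ) *
        (Nat.choose (2 * l + n) l : ℝ)

lemma trm_def (a κ : ℝ) (f : ℝ → ℝ) (n m k : ℕ) :
    trm a κ f n m k =
      ((-1 : ℝ) ^ k * (a * κ) ^ (2 * (n + k - m)) * ftilde a f (n + k - m) /
          ((2 : ℝ) ^ (n + k - m) * ((Nat.factorial (n + k - m) : ℝ)) ^ 2)) *
        ∑ l ∈ Finset.range (k / 2 + 1),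
          ((2 : ℝ) ^ (n + 2 * l))⁻¹ * (Nat.choose (k + n - m) (2 * l + n - m) : ℝ) *
            (Nat.choose (2 * l + n) l : ℝ) := rfl

lemma muN_eq (a κ C₁ : ℝ) (p : Fin 3 → ℝ) (f : ℝ → ℝ) (n : ℕ) :
    muN a κ C₁ p f n
      = C₁ * ∑ m : Fin 3, p m * κ ^ (2 * (m : ℕ)) * ∑' k : ℕ, trm a κ f n (m : ℕ) k := rfl

section Main
variable (a κ : ℝ) (f : ℝ → ℝ)

lemma trm_bound (ha : 0 < a) (hκ : 0 < κ) (hf : Measurable f)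
    (hf01 : ∀ r ∈ Set.Icc (0 : ℝ) a, f r ∈ Set.Icc (0 : ℝ) 1)
    (ν q K : ℕ) (hq : q ≤ 2) (hK : 1 ≤ K) :
    |trm a κ f (ν+2) (2-q) K| ≤
      8*((K:ℝ)+2) * (Real.exp 1 * (max ((a*κ)^2) 1 / ((ν:ℝ)+1)))^K *
        (max ((a*κ)^2) 1 / ((ν:ℝ)+1))^q *
        (ftilde a f ν * ((a*κ)^2)^ν / (2^(2*ν+4) * ((ν ! : ℝ))^2)) := by
  set b : ℝ := (a*κ)^2 with hbdef
  set β : ℝ := max b 1 with hβdef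
  have hb : 0 < b := by positivity
  have hbβ : b ≤ β := le_max_left _ _
  have hβ1 : (1:ℝ) ≤ β := le_max_right _ _
  set F := ftilde a f with hFdef
  have hFnn : ∀ j, 0 ≤ F j := ftilde_nonneg a f ha hf01
  have hFanti : ∀ {j j'}, j ≤ j' → F j' ≤ F j := fun h => ftilde_anti a f ha hf hf01 h
  have h1 : (ν+2) + K - (2-q) = ν + (K+q) := by omega
  have h2 : K + (ν+2) - (2-q) = ν + (K+q) := by omega
  have hpm : (a*κ) ^ (2 * (ν + (K+q))) = b ^ (ν + (K+q)) := by
    rw [hbdef, ← pow_mul]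
  rw [trm, h1, h2, hpm]
  set νt := ν + (K+q) with hνt
  set Z : ℝ := (2:ℝ)^νt * ((νt ! : ℝ))^2 with hZ
  have hZ0 : 0 < Z := by positivity
  set inner := ∑ l ∈ Finset.range (K / 2 + 1),
      ((2 : ℝ) ^ ((ν+2) + 2 * l))⁻¹ * (Nat.choose νt (2 * l + (ν+2) - (2-q)) : ℝ) *
        (Nat.choose (2 * l + (ν+2)) l : ℝ) with hinnerdef
  have hinner_nn : 0 ≤ inner := by
    apply Finset.sum_nonneg
    intro l _
    positivity
  -- compute the absolute value
  have hfirst_nn : 0 ≤ b ^ νt * F νt / Z :=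
    div_nonneg (mul_nonneg (pow_nonneg hb.le _) (hFnn νt)) hZ0.le
  have habs : |(-1 : ℝ) ^ K * b ^ νt * F νt / Z * inner|
      = b ^ νt * F νt / Z * inner := by
    have e : (-1:ℝ)^K * b^νt * F νt / Z * inner = (-1:ℝ)^K * (b^νt * F νt / Z * inner) := by
      ring
    rw [e, abs_mul, abs_pow, abs_neg, abs_one, one_pow, one_mul,
      abs_of_nonneg (mul_nonneg hfirst_nn hinner_nn)]
  rw [habs]
  have hKcast : ∀ l, l ∈ Finset.range (K/2+1) →
      ((2 : ℝ) ^ ((ν+2) + 2 * l))⁻¹ * (Nat.choose νt (2 * l + (ν+2) - (2-q)) : ℝ) *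
        (Nat.choose (2 * l + (ν+2)) l : ℝ)
      ≤ ((2:ℝ)^(ν+2))⁻¹ * (((ν+K+2)^K : ℕ):ℝ) := by
    intro l hl
    have h2l : 2*l ≤ K := by
      have := Finset.mem_range.1 hl; omega
    have hnat : Nat.choose νt (2*l+(ν+2)-(2-q)) * Nat.choose (2*l+(ν+2)) l ≤ (ν+K+2)^K := by
      have e1 : 2*l+(ν+2)-(2-q) = νt - (K - 2*l) := by omega
      rw [e1, Nat.choose_symm (by omega : K - 2*l ≤ νt)]
      calc Nat.choose νt (K-2*l) * Nat.choose (2*l+(ν+2)) l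
          ≤ νt^(K-2*l) * (2*l+(ν+2))^l :=
            Nat.mul_le_mul (Nat.choose_le_pow _ _) (Nat.choose_le_pow _ _)
        _ ≤ (ν+K+2)^(K-2*l) * (ν+K+2)^l :=
            Nat.mul_le_mul (Nat.pow_le_pow_left (by omega) _) (Nat.pow_le_pow_left (by omega) _)
        _ = (ν+K+2)^(K-2*l+l) := (pow_add _ _ _).symm
        _ ≤ (ν+K+2)^K := Nat.pow_le_pow_right (by omega) (by omega)
    have hinv : ((2 : ℝ) ^ ((ν+2) + 2 * l))⁻¹ ≤ ((2:ℝ)^(ν+2))⁻¹ := by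
      apply inv_anti₀ (by positivity)
      exact pow_le_pow_right₀ one_le_two (by omega)
    have hcast : (Nat.choose νt (2*l+(ν+2)-(2-q)) : ℝ) * (Nat.choose (2*l+(ν+2)) l : ℝ)
        ≤ (((ν+K+2)^K : ℕ):ℝ) := by exact_mod_cast hnat
    calc ((2 : ℝ) ^ ((ν+2) + 2 * l))⁻¹ * (Nat.choose νt (2 * l + (ν+2) - (2-q)) : ℝ) *
          (Nat.choose (2 * l + (ν+2)) l : ℝ)
        = ((2 : ℝ) ^ ((ν+2) + 2 * l))⁻¹ * ((Nat.choose νt (2 * l + (ν+2) - (2-q)) : ℝ) *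
          (Nat.choose (2 * l + (ν+2)) l : ℝ)) := by ring
      _ ≤ ((2:ℝ)^(ν+2))⁻¹ * (((ν+K+2)^K : ℕ):ℝ) :=
          mul_le_mul hinv hcast (by positivity) (by positivity)
  have hinner_le : inner ≤ ((K/2+1:ℕ):ℝ) * (((2:ℝ)^(ν+2))⁻¹ * (((ν+K+2)^K : ℕ):ℝ)) := by
    have := Finset.sum_le_card_nsmul (Finset.range (K/2+1)) _ _ hKcast
    rwa [Finset.card_range, nsmul_eq_mul] at this
  -- main chain
  have hFle : F νt ≤ F ν := hFanti (by omega)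
  have key := core b β hb hbβ hβ1 ν q K hK
  have key' := mul_le_mul_of_nonneg_left key
    (mul_nonneg (hFnn ν) (pow_nonneg hb.le ν) :
      (0:ℝ) ≤ F ν * b ^ ν)
  have hsplitb : b^νt = b^ν * b^(K+q) := by rw [hνt, pow_add]
  calc b ^ νt * F νt / Z * inner
      ≤ b ^ νt * F νt / Z * (((K/2+1:ℕ):ℝ) * (((2:ℝ)^(ν+2))⁻¹ * (((ν+K+2)^K : ℕ):ℝ))) :=
        mul_le_mul_of_nonneg_left hinner_le hfirst_nn
    _ ≤ b ^ νt * F ν / Z * (((K/2+1:ℕ):ℝ) * (((2:ℝ)^(ν+2))⁻¹ * (((ν+K+2)^K : ℕ):ℝ))) := by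
        gcongr
    _ = (F ν * b ^ ν) * (b^(K+q) * ((K:ℝ)+(ν:ℝ)+2)^K * ((K/2+1 : ℕ):ℝ) * ((ν ! : ℝ))^2 * 2^(2*ν+4))
          / ((2^(ν+(K+q)) * (((ν+(K+q))! : ℝ))^2 * 2^(ν+2)) * (2^(2*ν+4) * ((ν ! : ℝ))^2)) := by
        rw [hsplitb, hZ, hνt]
        push_cast
        field_simp
        ring
    _ ≤ (F ν * b ^ ν) * (8*((K:ℝ)+2) * (Real.exp 1 * (β/((ν:ℝ)+1)))^K * (β/((ν:ℝ)+1))^q *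
          (2^(ν+(K+q)) * (((ν+(K+q))! : ℝ))^2 * 2^(ν+2)))
          / ((2^(ν+(K+q)) * (((ν+(K+q))! : ℝ))^2 * 2^(ν+2)) * (2^(2*ν+4) * ((ν ! : ℝ))^2)) := by
        exact (div_le_div_iff_of_pos_right (by positivity)).2 key' 
    _ = 8*((K:ℝ)+2) * (Real.exp 1 * (β/((ν:ℝ)+1)))^K * (β/((ν:ℝ)+1))^q *
          (F ν * b^ν / (2^(2*ν+4) * ((ν ! : ℝ))^2)) := by
        field_simp


lemma trm_zero (ν q : ℕ) (hq : q ≤ 2) :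
    trm a κ f (ν+2) (2-q) 0
      = ((a*κ)^2)^(ν+q) * ftilde a f (ν+q) / (2^(ν+q) * (((ν+q) ! : ℝ))^2) * ((2:ℝ)^(ν+2))⁻¹ := by
  have h1 : (ν+2) + 0 - (2-q) = ν+q := by omega
  have h3 : 2*0 + (ν+2) - (2-q) = ν+q := by omega
  have h2 : 0 + (ν+2) - (2-q) = ν+q := by omega
  have h4 : (ν+2) - (2-q) = ν+q := by omega
  rw [trm, h1, h2]
  norm_num [Finset.sum_range_one, h3, h4, Nat.choose_self, Nat.choose_zero_right, pow_mul]

lemma trm_zero_nonneg (ha : 0 < a)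
    (hf01 : ∀ r ∈ Set.Icc (0 : ℝ) a, f r ∈ Set.Icc (0 : ℝ) 1) (ν q : ℕ) (hq : q ≤ 2) :
    0 ≤ trm a κ f (ν+2) (2-q) 0 := by
  rw [trm_zero a κ f ν q hq]
  have hF := ftilde_nonneg a f ha hf01 (ν+q)
  apply mul_nonneg (div_nonneg (mul_nonneg (by positivity) hF) (by positivity)) (by positivity)

lemma trm_zero_le (ha : 0 < a) (hκ : 0 < κ) (hf : Measurable f)
    (hf01 : ∀ r ∈ Set.Icc (0 : ℝ) a, f r ∈ Set.Icc (0 : ℝ) 1) (ν q : ℕ) (hq : q ≤ 2) :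
    trm a κ f (ν+2) (2-q) 0 ≤
      4 * (max ((a*κ)^2) 1 / ((ν:ℝ)+1))^q *
        (ftilde a f ν * ((a*κ)^2)^ν / (2^(2*ν+4) * ((ν ! : ℝ))^2)) := by
  rw [trm_zero a κ f ν q hq]
  set b : ℝ := (a*κ)^2 with hbdef
  set β : ℝ := max b 1 with hβdef
  have hb : 0 < b := by positivity
  have hbβ : b ≤ β := le_max_left _ _
  have hβ1 : (1:ℝ) ≤ β := le_max_right _ _
  set F := ftilde a f with hFdef
  have hFnn : ∀ j, 0 ≤ F j := ftilde_nonneg a f ha hf01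
  have hA1 : (1:ℝ) ≤ (ν:ℝ)+1 := by
    have : (0:ℝ) ≤ (ν:ℝ) := Nat.cast_nonneg ν
    linarith
  set A : ℝ := (ν:ℝ)+1 with hAdef
  have hA0 : (0:ℝ) < A := by linarith
  have hFle : F (ν+q) ≤ F ν := ftilde_anti a f ha hf hf01 (by omega)
  have minicore : b^q * ((ν ! : ℝ))^2 * 2^(2*ν+4)
      ≤ 4*(β/A)^q * (2^(ν+q) * (((ν+q) ! : ℝ))^2 * 2^(ν+2)) := by
    have hform : 4*(β/A)^q * (2^(ν+q) * (((ν+q) ! : ℝ))^2 * 2^(ν+2))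
        = 4*β^q * (2^(ν+q) * (((ν+q) ! : ℝ))^2 * 2^(ν+2)) / A^q := by
      rw [div_pow]; ring
    rw [hform, le_div_iff₀ (by positivity)]
    have hf1 := fact_sq_lb1 ν q
    have hstep1 : b^q*A^q ≤ β^q*(A^q*A^q) := by
      calc b^q*A^q ≤ β^q*A^q := by
            apply mul_le_mul_of_nonneg_right (pow_le_pow_left₀ hb.le hbβ q) (by positivity)
        _ ≤ β^q*(A^q*A^q) := by
            apply mul_le_mul_of_nonneg_left _ (by positivity)
            exact le_mul_of_one_le_left (by positivity) (one_le_pow₀ hA1)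
    have hpows : (2:ℝ)^(2*ν+4)*2^q = 4*(2^(ν+q)*2^(ν+2)) := by
      rw [← pow_add, show 2*ν+4+q = ((ν+q)+(ν+2))+2 by ring, pow_add, pow_add]
      ring
    calc b^q * ((ν ! : ℝ))^2 * 2^(2*ν+4) * A^q
        = (b^q*A^q) * (((ν ! : ℝ))^2 * 2^(2*ν+4)) := by ring
      _ ≤ (β^q*(A^q*A^q)) * (((ν ! : ℝ))^2 * 2^(2*ν+4)) :=
          mul_le_mul_of_nonneg_right hstep1 (by positivity)
      _ = (((ν ! : ℝ))^2*(A^q)^2) * (β^q*2^(2*ν+4)) := by ring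
      _ ≤ (((ν+q) ! : ℝ))^2 * (β^q*2^(2*ν+4)) := by
          apply mul_le_mul_of_nonneg_right _ (by positivity)
          rw [hAdef] at *
          exact hf1
      _ ≤ (((ν+q) ! : ℝ))^2 * (β^q*(2^(2*ν+4)*2^q)) := by
          apply mul_le_mul_of_nonneg_left _ (by positivity)
          apply mul_le_mul_of_nonneg_left _ (by positivity)
          exact le_mul_of_one_le_right (by positivity) (one_le_pow₀ one_le_two)
      _ = 4*β^q * (2^(ν+q) * (((ν+q) ! : ℝ))^2 * 2^(ν+2)) := by
          rw [hpows]; ring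
  have key' := mul_le_mul_of_nonneg_left minicore
    (mul_nonneg (hFnn ν) (pow_nonneg hb.le ν) : (0:ℝ) ≤ F ν * b ^ ν)
  calc b^(ν+q) * F (ν+q) / (2^(ν+q) * (((ν+q) ! : ℝ))^2) * ((2:ℝ)^(ν+2))⁻¹
      ≤ b^(ν+q) * F ν / (2^(ν+q) * (((ν+q) ! : ℝ))^2) * ((2:ℝ)^(ν+2))⁻¹ := by
        gcongr
    _ = (F ν * b^ν) * (b^q * ((ν ! : ℝ))^2 * 2^(2*ν+4))
          / ((2^(ν+q) * (((ν+q) ! : ℝ))^2 * 2^(ν+2)) * (2^(2*ν+4) * ((ν ! : ℝ))^2)) := by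
        rw [pow_add b]
        field_simp
    _ ≤ (F ν * b^ν) * (4*(β/A)^q * (2^(ν+q) * (((ν+q) ! : ℝ))^2 * 2^(ν+2)))
          / ((2^(ν+q) * (((ν+q) ! : ℝ))^2 * 2^(ν+2)) * (2^(2*ν+4) * ((ν ! : ℝ))^2)) :=
        (div_le_div_iff_of_pos_right (by positivity)).2 key'
    _ = 4 * (β/A)^q * (F ν * b^ν / (2^(2*ν+4) * ((ν ! : ℝ))^2)) := by
        field_simp

lemma trm_zero_q2 (ha : 0 < a) (hκ : 0 < κ) (ν : ℕ) :
    trm a κ f (ν+2) 2 0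
      = 4 * (ftilde a f ν * ((a*κ)^2)^ν / (2^(2*ν+4) * ((ν ! : ℝ))^2)) := by
  have h := trm_zero a κ f ν 0 (by norm_num)
  norm_num at h
  rw [h]
  have hpows : (2:ℝ)^(2*ν+4) = 2^ν * 2^(ν+2) * 4 := by
    rw [show 2*ν+4 = (ν+(ν+2))+2 by ring, pow_add, pow_add]
    ring
  rw [hpows]
  have h1 : ((2:ℝ))^ν ≠ 0 := by positivity
  have h2 : ((2:ℝ))^(ν+2) ≠ 0 := by positivity
  have h3 : ((ν ! : ℝ)) ≠ 0 := by positivity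
  field_simp


lemma htsum8 : ∑' k:ℕ, (((k:ℝ))+3)*(1/2)^k = 8 := by
  have h1 : Summable fun k : ℕ => (k:ℝ)*(1/2)^k := by
    have := summable_pow_mul_geometric_of_norm_lt_one (R := ℝ) 1
      (r := (1/2)) (by rw [Real.norm_eq_abs, abs_lt]; norm_num)
    simpa using this
  have h2 : Summable fun k : ℕ => ((1:ℝ)/2)^k :=
    summable_geometric_of_lt_one (by norm_num) (by norm_num)
  have e1 : ∀ k:ℕ, (((k:ℝ))+3)*(1/2)^k = (k:ℝ)*(1/2)^k + 3*((1/2)^k) := fun k => by ring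
  rw [tsum_congr e1, Summable.tsum_add h1 (h2.mul_left 3), tsum_mul_left,
    tsum_geometric_of_lt_one (by norm_num) (by norm_num),
    tsum_coe_mul_geometric_of_norm_lt_one (by rw [Real.norm_eq_abs, abs_lt]; norm_num)]
  norm_num

lemma summable8 : Summable fun k : ℕ => (((k:ℝ))+3)*(1/2)^k := by
  have h1 : Summable fun k : ℕ => (k:ℝ)*(1/2)^k := by
    have := summable_pow_mul_geometric_of_norm_lt_one (R := ℝ) 1
      (r := (1/2)) (by rw [Real.norm_eq_abs, abs_lt]; norm_num)
    simpa using this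
  have h2 : Summable fun k : ℕ => ((1:ℝ)/2)^k :=
    summable_geometric_of_lt_one (by norm_num) (by norm_num)
  have := h1.add (h2.mul_left 3)
  apply this.congr
  intro k
  ring

lemma tail_bound (ha : 0 < a) (hκ : 0 < κ) (hf : Measurable f)
    (hf01 : ∀ r ∈ Set.Icc (0 : ℝ) a, f r ∈ Set.Icc (0 : ℝ) 1) (ν q : ℕ) (hq : q ≤ 2)
    (hS : Summable (fun k => |trm a κ f (ν+2) (2-q) k|))
    (heε : Real.exp 1 * (max ((a*κ)^2) 1 / ((ν:ℝ)+1)) ≤ 1/2) :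
    ∑' k : ℕ, |trm a κ f (ν+2) (2-q) (k+1)|
      ≤ 64 * Real.exp 1 * (max ((a*κ)^2) 1 / ((ν:ℝ)+1))^(q+1) *
        (ftilde a f ν * ((a*κ)^2)^ν / (2^(2*ν+4) * ((ν ! : ℝ))^2)) := by
  set b : ℝ := (a*κ)^2 with hbdef
  set β : ℝ := max b 1 with hβdef
  have hb : 0 < b := by positivity
  have hβ1 : (1:ℝ) ≤ β := le_max_right _ _
  have hA1 : (1:ℝ) ≤ (ν:ℝ)+1 := by
    have : (0:ℝ) ≤ (ν:ℝ) := Nat.cast_nonneg ν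
    linarith
  set ε : ℝ := β / ((ν:ℝ)+1) with hεdef
  have hε0 : 0 < ε := by positivity
  set Dν : ℝ := ftilde a f ν * b^ν / (2^(2*ν+4) * ((ν ! : ℝ))^2) with hDdef
  have hDν0 : 0 ≤ Dν := by
    apply div_nonneg (mul_nonneg (ftilde_nonneg a f ha hf01 ν) (by positivity)) (by positivity)
  have hterm : ∀ k : ℕ, |trm a κ f (ν+2) (2-q) (k+1)|
      ≤ (8 * Real.exp 1 * ε * ε^q * Dν) * ((((k:ℝ))+3)*(1/2)^k) := by
    intro k
    have hb1 := trm_bound a κ f ha hκ hf hf01 ν q (k+1) hq (by omega)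
    have hcast : ((k+1 : ℕ):ℝ) + 2 = (k:ℝ)+3 := by push_cast; ring
    rw [hcast] at hb1
    calc |trm a κ f (ν+2) (2-q) (k+1)|
        ≤ 8*((k:ℝ)+3) * (Real.exp 1 * ε)^(k+1) * ε^q * Dν := hb1
      _ ≤ 8*((k:ℝ)+3) * (Real.exp 1 * ε * (1/2)^k) * ε^q * Dν := by
          apply mul_le_mul_of_nonneg_right _ hDν0
          apply mul_le_mul_of_nonneg_right _ (pow_nonneg hε0.le q)
          apply mul_le_mul_of_nonneg_left _ (by positivity)
          calc (Real.exp 1 * ε)^(k+1) = (Real.exp 1 * ε)^k * (Real.exp 1 * ε) := pow_succ _ _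
            _ ≤ (1/2)^k * (Real.exp 1 * ε) := by
                apply mul_le_mul_of_nonneg_right _ (by positivity)
                exact pow_le_pow_left₀ (by positivity) heε k
            _ = Real.exp 1 * ε * (1/2)^k := by ring
      _ = (8 * Real.exp 1 * ε * ε^q * Dν) * ((((k:ℝ))+3)*(1/2)^k) := by ring
  have hS1 : Summable (fun k => |trm a κ f (ν+2) (2-q) (k+1)|) :=
    (summable_nat_add_iff 1).2 hS
  calc ∑' k : ℕ, |trm a κ f (ν+2) (2-q) (k+1)|
      ≤ ∑' k : ℕ, (8 * Real.exp 1 * ε * ε^q * Dν) * ((((k:ℝ))+3)*(1/2)^k) :=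
        Summable.tsum_le_tsum hterm hS1 (summable8.mul_left _)
    _ = (8 * Real.exp 1 * ε * ε^q * Dν) * 8 := by
        rw [tsum_mul_left, htsum8]
    _ = 64 * Real.exp 1 * ε^(q+1) * Dν := by
        rw [pow_succ]
        ring

lemma A_bounds (ha : 0 < a) (hκ : 0 < κ) (hf : Measurable f)
    (hf01 : ∀ r ∈ Set.Icc (0 : ℝ) a, f r ∈ Set.Icc (0 : ℝ) 1) (ν q : ℕ) (hq : q ≤ 2)
    (hS : Summable (fun k => |trm a κ f (ν+2) (2-q) k|))
    (hcond : 64 * Real.exp 1 * (max ((a*κ)^2) 1 / ((ν:ℝ)+1)) ≤ 1) :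
    |∑' k : ℕ, trm a κ f (ν+2) (2-q) k|
      ≤ 5 * (max ((a*κ)^2) 1 / ((ν:ℝ)+1))^q *
        (ftilde a f ν * ((a*κ)^2)^ν / (2^(2*ν+4) * ((ν ! : ℝ))^2)) := by
  set b : ℝ := (a*κ)^2 with hbdef
  set β : ℝ := max b 1 with hβdef
  have hb : 0 < b := by positivity
  have hβ1 : (1:ℝ) ≤ β := le_max_right _ _
  have hA1 : (1:ℝ) ≤ (ν:ℝ)+1 := by
    have : (0:ℝ) ≤ (ν:ℝ) := Nat.cast_nonneg ν
    linarith
  set ε : ℝ := β / ((ν:ℝ)+1) with hεdef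
  have hε0 : 0 < ε := by positivity
  have he2 : (2:ℝ) ≤ Real.exp 1 := by
    have := Real.add_one_le_exp (1:ℝ); linarith
  have heε : Real.exp 1 * ε ≤ 1/2 := by nlinarith [Real.exp_pos 1, hε0]
  set Dν : ℝ := ftilde a f ν * b^ν / (2^(2*ν+4) * ((ν ! : ℝ))^2) with hDdef
  have hDν0 : 0 ≤ Dν := by
    apply div_nonneg (mul_nonneg (ftilde_nonneg a f ha hf01 ν) (by positivity)) (by positivity)
  have hsplit : ∑' k : ℕ, trm a κ f (ν+2) (2-q) k
      = trm a κ f (ν+2) (2-q) 0 + ∑' k : ℕ, trm a κ f (ν+2) (2-q) (k+1) :=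
    Summable.tsum_eq_zero_add hS.of_abs
  have htail := tail_bound a κ f ha hκ hf hf01 ν q hq hS heε
  have htail' : |∑' k : ℕ, trm a κ f (ν+2) (2-q) (k+1)| ≤ 64 * Real.exp 1 * ε^(q+1) * Dν := by
    refine le_trans ?_ htail
    have := norm_tsum_le_tsum_norm (f := fun k => trm a κ f (ν+2) (2-q) (k+1)) ?_
    · simpa [Real.norm_eq_abs] using this
    · simpa [Real.norm_eq_abs] using (summable_nat_add_iff 1).2 hS
  have h0le := trm_zero_le a κ f ha hκ hf hf01 ν q hq
  have h0nn := trm_zero_nonneg a κ f ha hf01 ν q hq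
  have htailsmall : 64 * Real.exp 1 * ε^(q+1) * Dν ≤ ε^q * Dν := by
    rw [pow_succ]
    calc 64 * Real.exp 1 * (ε^q * ε) * Dν = (64 * Real.exp 1 * ε) * (ε^q * Dν) := by ring
      _ ≤ 1 * (ε^q * Dν) := by
          apply mul_le_mul_of_nonneg_right hcond (mul_nonneg (by positivity) hDν0)
      _ = ε^q * Dν := one_mul _
  rw [hsplit]
  calc |trm a κ f (ν+2) (2-q) 0 + ∑' k : ℕ, trm a κ f (ν+2) (2-q) (k+1)|
      ≤ |trm a κ f (ν+2) (2-q) 0| + |∑' k : ℕ, trm a κ f (ν+2) (2-q) (k+1)| := abs_add_le _ _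
    _ ≤ 4 * ε^q * Dν + ε^q * Dν := by
        apply _root_.add_le_add
        · rw [abs_of_nonneg h0nn]
          calc trm a κ f (ν+2) (2-q) 0 ≤ 4 * ε^q * (ftilde a f ν * b^ν / (2^(2*ν+4) * ((ν ! : ℝ))^2)) := h0le
            _ = 4 * ε^q * Dν := by rw [hDdef]
        · exact htail'.trans htailsmall
    _ = 5 * ε^q * Dν := by ring

lemma A2_bounds (ha : 0 < a) (hκ : 0 < κ) (hf : Measurable f)
    (hf01 : ∀ r ∈ Set.Icc (0 : ℝ) a, f r ∈ Set.Icc (0 : ℝ) 1) (ν : ℕ)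
    (hS : Summable (fun k => |trm a κ f (ν+2) 2 k|))
    (hcond : 64 * Real.exp 1 * (max ((a*κ)^2) 1 / ((ν:ℝ)+1)) ≤ 1) :
    3 * (ftilde a f ν * ((a*κ)^2)^ν / (2^(2*ν+4) * ((ν ! : ℝ))^2))
      ≤ ∑' k : ℕ, trm a κ f (ν+2) 2 k ∧
    ∑' k : ℕ, trm a κ f (ν+2) 2 k
      ≤ 5 * (ftilde a f ν * ((a*κ)^2)^ν / (2^(2*ν+4) * ((ν ! : ℝ))^2)) := by
  set b : ℝ := (a*κ)^2 with hbdef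
  set β : ℝ := max b 1 with hβdef
  have hb : 0 < b := by positivity
  have hβ1 : (1:ℝ) ≤ β := le_max_right _ _
  have hA1 : (1:ℝ) ≤ (ν:ℝ)+1 := by
    have : (0:ℝ) ≤ (ν:ℝ) := Nat.cast_nonneg ν
    linarith
  set ε : ℝ := β / ((ν:ℝ)+1) with hεdef
  have hε0 : 0 < ε := by positivity
  have he2 : (2:ℝ) ≤ Real.exp 1 := by
    have := Real.add_one_le_exp (1:ℝ); linarith
  have heε : Real.exp 1 * ε ≤ 1/2 := by nlinarith [Real.exp_pos 1, hε0]
  set Dν : ℝ := ftilde a f ν * b^ν / (2^(2*ν+4) * ((ν ! : ℝ))^2) with hDdef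
  have hDν0 : 0 ≤ Dν := by
    apply div_nonneg (mul_nonneg (ftilde_nonneg a f ha hf01 ν) (by positivity)) (by positivity)
  have hS' : Summable (fun k => |trm a κ f (ν+2) (2-0) k|) := hS
  have hsplit : ∑' k : ℕ, trm a κ f (ν+2) (2-0) k
      = trm a κ f (ν+2) (2-0) 0 + ∑' k : ℕ, trm a κ f (ν+2) (2-0) (k+1) :=
    Summable.tsum_eq_zero_add hS'.of_abs
  have htail := tail_bound a κ f ha hκ hf hf01 ν 0 (by norm_num) hS' heε
  have htail' : |∑' k : ℕ, trm a κ f (ν+2) (2-0) (k+1)| ≤ 64 * Real.exp 1 * ε^(0+1) * Dν := by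
    refine le_trans ?_ htail
    have := norm_tsum_le_tsum_norm (f := fun k => trm a κ f (ν+2) (2-0) (k+1)) ?_
    · simpa [Real.norm_eq_abs] using this
    · simpa [Real.norm_eq_abs] using (summable_nat_add_iff 1).2 hS'
  have htailsmall : 64 * Real.exp 1 * ε^(0+1) * Dν ≤ Dν := by
    calc 64 * Real.exp 1 * ε^(0+1) * Dν = (64 * Real.exp 1 * ε) * Dν := by ring
      _ ≤ 1 * Dν := mul_le_mul_of_nonneg_right hcond hDν0
      _ = Dν := one_mul _
  have h4 : trm a κ f (ν+2) (2-0) 0 = 4 * Dν := trm_zero_q2 a κ f ha hκ ν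
  have habs := abs_le.1 (htail'.trans htailsmall)
  constructor
  · calc 3 * Dν = 4 * Dν + (-Dν) := by ring
      _ ≤ trm a κ f (ν+2) (2-0) 0 + ∑' k : ℕ, trm a κ f (ν+2) (2-0) (k+1) := by
          apply _root_.add_le_add
          · rw [h4]
          · exact habs.1
      _ = ∑' k : ℕ, trm a κ f (ν+2) 2 k := hsplit.symm
  · calc ∑' k : ℕ, trm a κ f (ν+2) 2 k
        = trm a κ f (ν+2) (2-0) 0 + ∑' k : ℕ, trm a κ f (ν+2) (2-0) (k+1) := hsplit
      _ ≤ 4 * Dν + Dν := _root_.add_le_add (le_of_eq h4) habs.2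
      _ = 5 * Dν := by ring


end Main

lemma stirling_window : ∃ N₂ : ℕ, ∀ ν : ℕ, N₂ ≤ ν → 1 ≤ ν →
    2*(ν:ℝ)*(((ν:ℝ)/Real.exp 1)^ν)^2 ≤ ((ν ! : ℝ))^2 ∧
    ((ν ! : ℝ))^2 ≤ 8*(ν:ℝ)*(((ν:ℝ)/Real.exp 1)^ν)^2 := by
  have h := Stirling.tendsto_stirlingSeq_sqrt_pi
  have hπ1 : (1:ℝ) < Real.sqrt Real.pi := by
    rw [show (1:ℝ) = Real.sqrt 1 by simp]
    exact Real.sqrt_lt_sqrt (by norm_num) (by linarith [Real.pi_gt_three])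
  have hπ2 : Real.sqrt Real.pi < 2 := by
    rw [show (2:ℝ) = Real.sqrt 4 by
      rw [show (4:ℝ) = 2^2 by norm_num, Real.sqrt_sq (by norm_num : (0:ℝ) ≤ 2)]]
    exact Real.sqrt_lt_sqrt (by positivity) (by linarith [Real.pi_lt_d2])
  have hev : ∀ᶠ ν in Filter.atTop, Stirling.stirlingSeq ν ∈ Set.Ioo 1 2 :=
    h.eventually (Ioo_mem_nhds hπ1 hπ2)
  obtain ⟨N₂, hN₂⟩ := Filter.eventually_atTop.1 hev
  refine ⟨N₂, fun ν hN hν1 => ?_⟩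
  obtain ⟨hlo, hhi⟩ := hN₂ ν hN
  have hν0 : (0:ℝ) < (ν:ℝ) := by exact_mod_cast hν1
  have hden : 0 < Real.sqrt (2*(ν:ℝ)) * ((ν:ℝ)/Real.exp 1)^ν := by
    apply mul_pos (Real.sqrt_pos.2 (by linarith)) (pow_pos (by positivity) ν)
  have hdef : Stirling.stirlingSeq ν
      = (ν ! : ℝ) / (Real.sqrt (2*(ν:ℝ)) * ((ν:ℝ)/Real.exp 1)^ν) := rfl
  rw [hdef] at hlo hhi
  have h1 : Real.sqrt (2*(ν:ℝ)) * ((ν:ℝ)/Real.exp 1)^ν < (ν ! : ℝ) :=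
    (one_lt_div hden).1 hlo
  have h2 : (ν ! : ℝ) < 2 * (Real.sqrt (2*(ν:ℝ)) * ((ν:ℝ)/Real.exp 1)^ν) :=
    (div_lt_iff₀ hden).1 hhi
  have hsq : (Real.sqrt (2*(ν:ℝ)))^2 = 2*(ν:ℝ) := Real.sq_sqrt (by linarith)
  constructor
  · calc 2*(ν:ℝ)*(((ν:ℝ)/Real.exp 1)^ν)^2
        = (Real.sqrt (2*(ν:ℝ)) * ((ν:ℝ)/Real.exp 1)^ν)^2 := by rw [mul_pow, hsq]
      _ ≤ ((ν ! : ℝ))^2 := by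
          apply pow_le_pow_left₀ hden.le h1.le
  · calc ((ν ! : ℝ))^2 ≤ (2 * (Real.sqrt (2*(ν:ℝ)) * ((ν:ℝ)/Real.exp 1)^ν))^2 := by
          apply pow_le_pow_left₀ (by positivity) h2.le
      _ = 8*(ν:ℝ)*(((ν:ℝ)/Real.exp 1)^ν)^2 := by
          rw [mul_pow, mul_pow, hsq]; ring

lemma stirling_ratio (b : ℝ) (hb : 0 < b) (ν : ℕ) (hν : 2 ≤ ν)
    (hfl : 2*(ν:ℝ)*(((ν:ℝ)/Real.exp 1)^ν)^2 ≤ ((ν ! : ℝ))^2)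
    (hfu : ((ν ! : ℝ))^2 ≤ 8*(ν:ℝ)*(((ν:ℝ)/Real.exp 1)^ν)^2) :
    1/(64*b^2*Real.exp 1^4) *
      (8*((ν:ℝ)+2)^3*b^(ν+2)*Real.exp 1^(2*(ν+2))/(2*((ν:ℝ)+2))^(2*(ν+2)))
      ≤ b^ν/(2^(2*ν+4)*((ν ! : ℝ))^2)
    ∧ b^ν/(2^(2*ν+4)*((ν ! : ℝ))^2)
      ≤ 3/(16*b^2) *
        (8*((ν:ℝ)+2)^3*b^(ν+2)*Real.exp 1^(2*(ν+2))/(2*((ν:ℝ)+2))^(2*(ν+2))) := by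
  set E : ℝ := Real.exp 1 with hEdef
  have hE0 : 0 < E := Real.exp_pos 1
  have hν1 : (1:ℝ) ≤ (ν:ℝ) := by exact_mod_cast (show 1 ≤ ν by omega)
  have hν0 : (0:ℝ) < (ν:ℝ) := by linarith
  set nn : ℝ := (ν:ℝ)+2 with hnndef
  have hnn0 : 0 < nn := by linarith
  have hfact0 : (0:ℝ) < ((ν ! : ℝ)) := by positivity
  have hEν0 : (0:ℝ) < E^ν := by positivity
  -- power decompositions
  have hEsplit : E^(2*(ν+2)) = (E^ν)^2*E^4 := by
    rw [← pow_mul, ← pow_add]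
    congr 1
    ring
  have hnnsplit : nn^(2*(ν+2)) = nn^3 * nn * (nn^ν)^2 := by
    rw [← pow_mul, ← pow_succ, ← pow_add]
    congr 1
    omega
  have h2split : (2:ℝ)^(2*(ν+2)) = 2^(2*ν+4) := by
    rw [show 2*(ν+2) = 2*ν+4 from by omega]
  -- de-divided Stirling bounds
  have hdiv : (((ν:ℝ)/E)^ν)^2 = ((ν:ℝ)^ν)^2/(E^ν)^2 := by rw [div_pow, div_pow]
  have hfu' : ((ν ! : ℝ))^2*(E^ν)^2 ≤ 8*(ν:ℝ)*((ν:ℝ)^ν)^2 := by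
    rw [hdiv] at hfu
    have h8 : 8*(ν:ℝ)*(((ν:ℝ)^ν)^2/(E^ν)^2) = 8*(ν:ℝ)*((ν:ℝ)^ν)^2/(E^ν)^2 := by ring
    rw [h8, le_div_iff₀ (by positivity)] at hfu
    exact hfu
  have hfl' : 2*(ν:ℝ)*((ν:ℝ)^ν)^2 ≤ ((ν ! : ℝ))^2*(E^ν)^2 := by
    rw [hdiv] at hfl
    have h2 : 2*(ν:ℝ)*(((ν:ℝ)^ν)^2/(E^ν)^2) = 2*(ν:ℝ)*((ν:ℝ)^ν)^2/(E^ν)^2 := by ring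
    rw [h2, div_le_iff₀ (by positivity)] at hfl
    exact hfl
  -- key inequalities
  have hkeyl : nn^3*(ν:ℝ)*(((ν:ℝ))^ν)^2 ≤ nn^(2*(ν+2)) := by
    rw [hnnsplit]
    have h1 : (ν:ℝ) ≤ nn := by rw [hnndef]; linarith
    apply mul_le_mul (mul_le_mul le_rfl h1 hν0.le (by positivity)) _ (by positivity) (by positivity)
    apply pow_le_pow_left₀ (by positivity)
    exact pow_le_pow_left₀ hν0.le h1 ν
  have hexp : nn^ν ≤ E^2*((ν:ℝ))^ν := by
    have hx : ((ν:ℝ))*(1/(ν:ℝ)) = 1 := by field_simp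
    have h1 : (1:ℝ)+1/(ν:ℝ) ≤ Real.exp (1/(ν:ℝ)) := by
      have := Real.add_one_le_exp (1/(ν:ℝ)); linarith
    have h2 : ((1:ℝ)+1/(ν:ℝ))^ν ≤ Real.exp (1/(ν:ℝ))^ν :=
      pow_le_pow_left₀ (by positivity) h1 ν
    have h3 : Real.exp (1/(ν:ℝ))^ν = E := by
      rw [hEdef, ← Real.exp_nat_mul, hx]
    have hnn2 : nn ≤ (ν:ℝ)*((1+1/(ν:ℝ))^2) := by
      have he : (ν:ℝ)*((1+1/(ν:ℝ))^2) = (ν:ℝ)+2+1/(ν:ℝ) := by field_simp; ring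
      rw [he, hnndef]
      have : 0 < 1/(ν:ℝ) := by positivity
      linarith
    calc nn^ν ≤ ((ν:ℝ)*((1+1/(ν:ℝ))^2))^ν := pow_le_pow_left₀ hnn0.le hnn2 ν
      _ = ((ν:ℝ))^ν * (((1+1/(ν:ℝ))^ν)^2) := by
          rw [mul_pow, ← pow_mul, ← pow_mul, Nat.mul_comm]
      _ ≤ ((ν:ℝ))^ν * (E^2) := by
          apply mul_le_mul_of_nonneg_left _ (by positivity)
          apply pow_le_pow_left₀ (by positivity) (h2.trans_eq h3)
      _ = E^2*((ν:ℝ))^ν := by ring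
  have hkeyu : nn^(2*(ν+2)) ≤ 3*E^4*(nn^3*(ν:ℝ)*(((ν:ℝ))^ν)^2) := by
    rw [hnnsplit]
    have h3ν : nn ≤ 3*(ν:ℝ) := by rw [hnndef]; linarith
    calc nn^3 * nn * (nn^ν)^2 ≤ nn^3 * (3*(ν:ℝ)) * ((E^2*((ν:ℝ))^ν))^2 := by
          apply mul_le_mul (mul_le_mul le_rfl h3ν hnn0.le (by positivity))
            (pow_le_pow_left₀ (by positivity) hexp 2) (by positivity) (by positivity)
      _ = 3*E^4*(nn^3*(ν:ℝ)*(((ν:ℝ))^ν)^2) := by ring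
  constructor
  · rw [show (1:ℝ)/(64*b^2*E^4) * (8*nn^3*b^(ν+2)*E^(2*(ν+2))/(2*nn)^(2*(ν+2)))
        = (1*(8*nn^3*b^(ν+2)*E^(2*(ν+2))))/((64*b^2*E^4)*(2*nn)^(2*(ν+2)))
        from div_mul_div_comm _ _ _ _, one_mul,
      div_le_div_iff₀ (by positivity) (by positivity)]
    calc 8*nn^3*b^(ν+2)*E^(2*(ν+2)) * (2^(2*ν+4)*((ν ! : ℝ))^2)
        = (8*nn^3*b^(ν+2)*E^4*2^(2*ν+4)) * (((ν ! : ℝ))^2*(E^ν)^2) := by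
          rw [hEsplit]; ring
      _ ≤ (8*nn^3*b^(ν+2)*E^4*2^(2*ν+4)) * (8*(ν:ℝ)*((ν:ℝ)^ν)^2) :=
          mul_le_mul_of_nonneg_left hfu' (by positivity)
      _ = (64*b^ν*b^2*E^4*2^(2*ν+4)) * (nn^3*(ν:ℝ)*((ν:ℝ)^ν)^2) := by
          rw [pow_add b]; ring
      _ ≤ (64*b^ν*b^2*E^4*2^(2*ν+4)) * nn^(2*(ν+2)) :=
          mul_le_mul_of_nonneg_left hkeyl (by positivity)
      _ = b^ν * ((64*b^2*E^4)*(2*nn)^(2*(ν+2))) := by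
          rw [mul_pow 2 nn, h2split]; ring
  · rw [show (3:ℝ)/(16*b^2) * (8*nn^3*b^(ν+2)*E^(2*(ν+2))/(2*nn)^(2*(ν+2)))
        = (3*(8*nn^3*b^(ν+2)*E^(2*(ν+2))))/((16*b^2)*(2*nn)^(2*(ν+2)))
        from div_mul_div_comm _ _ _ _,
      div_le_div_iff₀ (by positivity) (by positivity)]
    calc b^ν * ((16*b^2)*(2*nn)^(2*(ν+2)))
        = (16*b^ν*b^2*2^(2*ν+4)) * nn^(2*(ν+2)) := by
          rw [mul_pow 2 nn, h2split]; ring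
      _ ≤ (16*b^ν*b^2*2^(2*ν+4)) * (3*E^4*(nn^3*(ν:ℝ)*((ν:ℝ)^ν)^2)) :=
          mul_le_mul_of_nonneg_left hkeyu (by positivity)
      _ = (24*nn^3*b^(ν+2)*E^4*2^(2*ν+4)) * (2*(ν:ℝ)*((ν:ℝ)^ν)^2) := by
          rw [pow_add b]; ring
      _ ≤ (24*nn^3*b^(ν+2)*E^4*2^(2*ν+4)) * (((ν ! : ℝ))^2*(E^ν)^2) :=
          mul_le_mul_of_nonneg_left hfl' (by positivity)
      _ = 3*(8*nn^3*b^(ν+2)*E^(2*(ν+2))) * (2^(2*ν+4)*((ν ! : ℝ))^2) := by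
          rw [hEsplit]; ring



set_option maxHeartbeats 2000000 in
theorem stmt15 (a κ C₁ : ℝ) (ha : 0 < a) (hκ : 0 < κ) (hC₁ : 0 < C₁)
    (p : Fin 3 → ℝ) (hp0 : 0 ≤ p 0) (hp1 : 0 ≤ p 1) (hp2 : 0 < p 2)
    (f : ℝ → ℝ) (hf : Measurable f)
    (hf01 : ∀ r ∈ Set.Icc (0 : ℝ) a, f r ∈ Set.Icc (0 : ℝ) 1)
    -- absolute convergence of the series in `k` :
    (hsum : ∀ n : ℕ, 2 ≤ n → ∀ m : Fin 3,
      Summable (fun k : ℕ =>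
        |((-1 : ℝ) ^ k * (a * κ) ^ (2 * (n + k - (m : ℕ))) * ftilde a f (n + k - (m : ℕ)) /
            ((2 : ℝ) ^ (n + k - (m : ℕ)) * ((Nat.factorial (n + k - (m : ℕ)) : ℝ)) ^ 2)) *
          ∑ l ∈ Finset.range (k / 2 + 1),
            ((2 : ℝ) ^ (n + 2 * l))⁻¹ *
              (Nat.choose (k + n - (m : ℕ)) (2 * l + n - (m : ℕ)) : ℝ) *
              (Nat.choose (2 * l + n) l : ℝ)|)) :
    ∃ c > (0 : ℝ), ∃ N : ℕ, ∀ n : ℕ, N < n →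
      c⁻¹ * (2 * (n : ℝ)) ^ 3 * ftilde a f (n - 2) *
          (a * κ * Real.exp 1 / (2 * (n : ℝ))) ^ (2 * n) ≤ muN a κ C₁ p f n ∧
      muN a κ C₁ p f n ≤
        c * (2 * (n : ℝ)) ^ 3 * ftilde a f (n - 2) *
          (a * κ * Real.exp 1 / (2 * (n : ℝ))) ^ (2 * n) := by
  have hb : (0:ℝ) < (a*κ)^2 := by positivity
  have hβ1 : (1:ℝ) ≤ max ((a*κ)^2) 1 := le_max_right _ _
  have hβ0 : (0:ℝ) < max ((a*κ)^2) 1 := by linarith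
  have hE0 : (0:ℝ) < Real.exp 1 := Real.exp_pos 1
  have hE2 : (2:ℝ) ≤ Real.exp 1 := by
    have := Real.add_one_le_exp (1:ℝ); linarith
  have hW0 : (0:ℝ) ≤ p 0 + p 1*κ^2 := by positivity
  have hpk : (0:ℝ) < p 2*κ^4 := by positivity
  have hrlo : (0:ℝ) < 1/(64*((a*κ)^2)^2*Real.exp 1^4) := by positivity
  have hrhi : (0:ℝ) < 3/(16*((a*κ)^2)^2) := by positivity
  obtain ⟨N₂, hN₂⟩ := stirling_window
  set M : ℝ := 64*Real.exp 1*(max ((a*κ)^2) 1)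
      + 5*((p 0 + p 1*κ^2)+1)*(max ((a*κ)^2) 1)/(p 2*κ^4) with hM
  set clo : ℝ := 2*C₁*(p 2)*κ^4*(1/(64*((a*κ)^2)^2*Real.exp 1^4)) with hclodef
  set chi : ℝ := 6*C₁*(p 2)*κ^4*(3/(16*((a*κ)^2)^2)) with hchidef
  have hclo : 0 < clo := by positivity
  have hchi : 0 < chi := by positivity
  refine ⟨max clo⁻¹ chi, lt_of_lt_of_le (inv_pos.2 hclo) (le_max_left _ _),
    N₂ + ⌈M⌉₊ + 4, ?_⟩
  intro n hn
  obtain ⟨ν, rfl⟩ : ∃ ν, n = ν + 2 := ⟨n - 2, by omega⟩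
  have hν2 : 2 ≤ ν := by omega
  have hνN₂ : N₂ ≤ ν := by omega
  have hA1 : (1:ℝ) ≤ (ν:ℝ)+1 := by
    have : (0:ℝ) ≤ (ν:ℝ) := Nat.cast_nonneg ν
    linarith
  have hA0 : (0:ℝ) < (ν:ℝ)+1 := by linarith
  -- largeness of ν
  have hcastν : M ≤ (ν:ℝ)+1 := by
    have h2 : ⌈M⌉₊ ≤ ν := by omega
    calc M ≤ (⌈M⌉₊:ℝ) := Nat.le_ceil M
      _ ≤ (ν:ℝ) := by exact_mod_cast h2
      _ ≤ (ν:ℝ)+1 := by linarith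
  have hcond : 64*Real.exp 1*(max ((a*κ)^2) 1 / ((ν:ℝ)+1)) ≤ 1 := by
    have hnn : (0:ℝ) ≤ 5*((p 0 + p 1*κ^2)+1)*(max ((a*κ)^2) 1)/(p 2*κ^4) := by positivity
    have h64 : 64*Real.exp 1*(max ((a*κ)^2) 1) ≤ (ν:ℝ)+1 := by
      rw [hM] at hcastν; linarith
    have he : 64*Real.exp 1*(max ((a*κ)^2) 1 / ((ν:ℝ)+1))
        = 64*Real.exp 1*(max ((a*κ)^2) 1)/((ν:ℝ)+1) := by ring
    rw [he, div_le_one hA0]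
    exact h64
  have hcross : 5*(p 0 + p 1*κ^2)*(max ((a*κ)^2) 1 / ((ν:ℝ)+1)) ≤ p 2*κ^4 := by
    have hnn : (0:ℝ) ≤ 64*Real.exp 1*(max ((a*κ)^2) 1) := by positivity
    have h5 : 5*((p 0 + p 1*κ^2)+1)*(max ((a*κ)^2) 1)/(p 2*κ^4) ≤ (ν:ℝ)+1 := by
      rw [hM] at hcastν; linarith
    rw [div_le_iff₀ hpk] at h5
    have he : 5*(p 0 + p 1*κ^2)*(max ((a*κ)^2) 1 / ((ν:ℝ)+1))
        = 5*(p 0 + p 1*κ^2)*(max ((a*κ)^2) 1)/((ν:ℝ)+1) := by ring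
    rw [he, div_le_iff₀ hA0]
    nlinarith [hβ0, hW0, hpk, hA1]
  have hε0 : (0:ℝ) < max ((a*κ)^2) 1 / ((ν:ℝ)+1) := by positivity
  have hε1 : max ((a*κ)^2) 1 / ((ν:ℝ)+1) ≤ 1 := by
    nlinarith [hε0, hE0]
  -- summability of the three series
  have hS0 : Summable (fun k => |trm a κ f (ν+2) 0 k|) := by
    have h := hsum (ν+2) (by omega) (0 : Fin 3)
    simp only [show ((0 : Fin 3):ℕ) = 0 from rfl] at h
    simpa only [trm_def] using h
  have hS1 : Summable (fun k => |trm a κ f (ν+2) 1 k|) := by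
    have h := hsum (ν+2) (by omega) (1 : Fin 3)
    simp only [show ((1 : Fin 3):ℕ) = 1 from rfl] at h
    simpa only [trm_def] using h
  have hS2 : Summable (fun k => |trm a κ f (ν+2) 2 k|) := by
    have h := hsum (ν+2) (by omega) (2 : Fin 3)
    simp only [show ((2 : Fin 3):ℕ) = 2 from rfl] at h
    simpa only [trm_def] using h
  -- series bounds
  have hF0 : 0 ≤ ftilde a f ν := ftilde_nonneg a f ha hf01 ν
  have hDν0 : (0:ℝ) ≤ ftilde a f ν * ((a*κ)^2)^ν / (2^(2*ν+4) * ((ν ! : ℝ))^2) := by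
    apply div_nonneg (mul_nonneg hF0 (by positivity)) (by positivity)
  have hA0b := A_bounds a κ f ha hκ hf hf01 ν 2 le_rfl (by norm_num; exact hS0) hcond
  have hA1b := A_bounds a κ f ha hκ hf hf01 ν 1 (by norm_num) (by norm_num; exact hS1) hcond
  norm_num at hA0b hA1b
  obtain ⟨hA2lo, hA2hi⟩ := A2_bounds a κ f ha hκ hf hf01 ν hS2 hcond
  -- weaken the q = 2 bound to an ε^1 bound
  have hpow21 : (max ((a*κ)^2) 1 / ((ν:ℝ)+1))^2 ≤ (max ((a*κ)^2) 1 / ((ν:ℝ)+1))^1 :=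
    pow_le_pow_of_le_one hε0.le hε1 (by norm_num)
  have hA0b' : |∑' k : ℕ, trm a κ f (ν+2) 0 k|
      ≤ 5 * (max ((a*κ)^2) 1 / ((ν:ℝ)+1)) *
        (ftilde a f ν * ((a*κ)^2)^ν / (2^(2*ν+4) * ((ν ! : ℝ))^2)) := by
    refine hA0b.trans ?_
    apply mul_le_mul_of_nonneg_right _ hDν0
    apply mul_le_mul_of_nonneg_left _ (by norm_num)
    calc (max ((a*κ)^2) 1 / ((ν:ℝ)+1))^2 ≤ (max ((a*κ)^2) 1 / ((ν:ℝ)+1))^1 := hpow21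
      _ = max ((a*κ)^2) 1 / ((ν:ℝ)+1) := pow_one _
  have hA1b' : |∑' k : ℕ, trm a κ f (ν+2) 1 k|
      ≤ 5 * (max ((a*κ)^2) 1 / ((ν:ℝ)+1)) *
        (ftilde a f ν * ((a*κ)^2)^ν / (2^(2*ν+4) * ((ν ! : ℝ))^2)) := by
    exact hA1b
  -- the μ decomposition
  have hmu : muN a κ C₁ p f (ν+2)
      = C₁*(p 0 * (∑' k : ℕ, trm a κ f (ν+2) 0 k)
        + p 1 * κ^2 * (∑' k : ℕ, trm a κ f (ν+2) 1 k)
        + p 2 * κ^4 * (∑' k : ℕ, trm a κ f (ν+2) 2 k)) := by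
    rw [muN_eq, Fin.sum_univ_three]
    norm_num [show ((0:Fin 3):ℕ) = 0 from rfl, show ((1:Fin 3):ℕ) = 1 from rfl,
      show ((2:Fin 3):ℕ) = 2 from rfl]
  -- combine into two-sided bounds for μ
  set Dν : ℝ := ftilde a f ν * ((a*κ)^2)^ν / (2^(2*ν+4) * ((ν ! : ℝ))^2) with hDνdef
  set εv : ℝ := max ((a*κ)^2) 1 / ((ν:ℝ)+1) with hεvdef
  set S0 : ℝ := ∑' k : ℕ, trm a κ f (ν+2) 0 k with hS0def
  set S1 : ℝ := ∑' k : ℕ, trm a κ f (ν+2) 1 k with hS1def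
  set S2 : ℝ := ∑' k : ℕ, trm a κ f (ν+2) 2 k with hS2def
  have habs0 := abs_le.1 hA0b'
  have habs1 := abs_le.1 hA1b'
  have g0l := mul_le_mul_of_nonneg_left habs0.1 hp0
  have g0u := mul_le_mul_of_nonneg_left habs0.2 hp0
  have g1l := mul_le_mul_of_nonneg_left habs1.1 (by positivity : (0:ℝ) ≤ p 1 * κ^2)
  have g1u := mul_le_mul_of_nonneg_left habs1.2 (by positivity : (0:ℝ) ≤ p 1 * κ^2)
  have g2l := mul_le_mul_of_nonneg_left hA2lo hpk.le
  have g2u := mul_le_mul_of_nonneg_left hA2hi hpk.le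
  have gc := mul_le_mul_of_nonneg_right hcross hDν0
  have hmulo : C₁*(2*(p 2*κ^4*(ftilde a f ν * ((a*κ)^2)^ν / (2^(2*ν+4) * ((ν ! : ℝ))^2))))
      ≤ muN a κ C₁ p f (ν+2) := by
    rw [hmu]
    apply mul_le_mul_of_nonneg_left _ hC₁.le
    linarith [g0l, g1l, g2l, gc]
  have hmuhi : muN a κ C₁ p f (ν+2)
      ≤ C₁*(6*(p 2*κ^4*(ftilde a f ν * ((a*κ)^2)^ν / (2^(2*ν+4) * ((ν ! : ℝ))^2)))) := by
    rw [hmu]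
    apply mul_le_mul_of_nonneg_left _ hC₁.le
    linarith [g0u, g1u, g2u, gc]
  -- Stirling comparison
  have hstir := hN₂ ν hνN₂ (by omega)
  have hsr := stirling_ratio ((a*κ)^2) hb ν hν2 hstir.1 hstir.2
  have hGpos : (0:ℝ) < 8*((ν:ℝ)+2)^3*((a*κ)^2)^(ν+2)*Real.exp 1^(2*(ν+2))
      /(2*((ν:ℝ)+2))^(2*(ν+2)) := by positivity
  have hT : (2*(((ν+2):ℕ):ℝ))^3 * ftilde a f ((ν+2) - 2) *
        (a*κ*Real.exp 1/(2*(((ν+2):ℕ):ℝ)))^(2*(ν+2))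
      = ftilde a f ν *
        (8*((ν:ℝ)+2)^3*((a*κ)^2)^(ν+2)*Real.exp 1^(2*(ν+2))/(2*((ν:ℝ)+2))^(2*(ν+2))) := by
    have hi : ((ν+2):ℕ) - 2 = ν := by omega
    rw [hi]
    have e1 : (a*κ*Real.exp 1)^(2*(ν+2))
        = ((a*κ)^2)^(ν+2)*Real.exp 1^(2*(ν+2)) := by
      rw [mul_pow, pow_mul]
    push_cast
    rw [div_pow, e1]
    ring
  have hDd : ftilde a f ν * ((a*κ)^2)^ν / (2^(2*ν+4) * ((ν ! : ℝ))^2)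
      = ftilde a f ν * (((a*κ)^2)^ν / (2^(2*ν+4) * ((ν ! : ℝ))^2)) := by ring
  have hFGnn : (0:ℝ) ≤ ftilde a f ν *
      (8*((ν:ℝ)+2)^3*((a*κ)^2)^(ν+2)*Real.exp 1^(2*(ν+2))/(2*((ν:ℝ)+2))^(2*(ν+2))) :=
    mul_nonneg hF0 hGpos.le
  have hcmaxinv : (max clo⁻¹ chi)⁻¹ ≤ clo := by
    calc (max clo⁻¹ chi)⁻¹ ≤ (clo⁻¹)⁻¹ :=
          inv_anti₀ (inv_pos.2 hclo) (le_max_left _ _)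
      _ = clo := inv_inv clo
  constructor
  · calc (max clo⁻¹ chi)⁻¹ * (2*(((ν+2):ℕ):ℝ))^3 * ftilde a f ((ν+2) - 2) *
          (a*κ*Real.exp 1/(2*(((ν+2):ℕ):ℝ)))^(2*(ν+2))
        = (max clo⁻¹ chi)⁻¹ * ((2*(((ν+2):ℕ):ℝ))^3 * ftilde a f ((ν+2) - 2) *
          (a*κ*Real.exp 1/(2*(((ν+2):ℕ):ℝ)))^(2*(ν+2))) := by ring
      _ = (max clo⁻¹ chi)⁻¹ * (ftilde a f ν *
          (8*((ν:ℝ)+2)^3*((a*κ)^2)^(ν+2)*Real.exp 1^(2*(ν+2))/(2*((ν:ℝ)+2))^(2*(ν+2)))) := by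
          rw [hT]
      _ ≤ clo * (ftilde a f ν *
          (8*((ν:ℝ)+2)^3*((a*κ)^2)^(ν+2)*Real.exp 1^(2*(ν+2))/(2*((ν:ℝ)+2))^(2*(ν+2)))) :=
          mul_le_mul_of_nonneg_right hcmaxinv hFGnn
      _ = C₁*(2*(p 2*κ^4*(ftilde a f ν * ((1/(64*((a*κ)^2)^2*Real.exp 1^4)) *
          (8*((ν:ℝ)+2)^3*((a*κ)^2)^(ν+2)*Real.exp 1^(2*(ν+2))/(2*((ν:ℝ)+2))^(2*(ν+2))))))) := by
          rw [hclodef]; ring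
      _ ≤ C₁*(2*(p 2*κ^4*(ftilde a f ν *
          (((a*κ)^2)^ν / (2^(2*ν+4) * ((ν ! : ℝ))^2))))) := by
          apply mul_le_mul_of_nonneg_left _ hC₁.le
          apply mul_le_mul_of_nonneg_left _ (by norm_num : (0:ℝ) ≤ 2)
          apply mul_le_mul_of_nonneg_left _ hpk.le
          exact mul_le_mul_of_nonneg_left hsr.1 hF0
      _ = C₁*(2*(p 2*κ^4*(ftilde a f ν * ((a*κ)^2)^ν / (2^(2*ν+4) * ((ν ! : ℝ))^2)))) := by
          rw [hDd]
      _ ≤ muN a κ C₁ p f (ν+2) := hmulo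
  · calc muN a κ C₁ p f (ν+2)
        ≤ C₁*(6*(p 2*κ^4*(ftilde a f ν * ((a*κ)^2)^ν / (2^(2*ν+4) * ((ν ! : ℝ))^2)))) := hmuhi
      _ = C₁*(6*(p 2*κ^4*(ftilde a f ν *
          (((a*κ)^2)^ν / (2^(2*ν+4) * ((ν ! : ℝ))^2))))) := by rw [hDd]
      _ ≤ C₁*(6*(p 2*κ^4*(ftilde a f ν * ((3/(16*((a*κ)^2)^2)) *
          (8*((ν:ℝ)+2)^3*((a*κ)^2)^(ν+2)*Real.exp 1^(2*(ν+2))/(2*((ν:ℝ)+2))^(2*(ν+2))))))) := by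
          apply mul_le_mul_of_nonneg_left _ hC₁.le
          apply mul_le_mul_of_nonneg_left _ (by norm_num : (0:ℝ) ≤ 6)
          apply mul_le_mul_of_nonneg_left _ hpk.le
          exact mul_le_mul_of_nonneg_left hsr.2 hF0
      _ = chi * (ftilde a f ν *
          (8*((ν:ℝ)+2)^3*((a*κ)^2)^(ν+2)*Real.exp 1^(2*(ν+2))/(2*((ν:ℝ)+2))^(2*(ν+2)))) := by
          rw [hchidef]; ring
      _ ≤ (max clo⁻¹ chi) * (ftilde a f ν *
          (8*((ν:ℝ)+2)^3*((a*κ)^2)^(ν+2)*Real.exp 1^(2*(ν+2))/(2*((ν:ℝ)+2))^(2*(ν+2)))) :=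
          mul_le_mul_of_nonneg_right (le_max_right _ _) hFGnn
      _ = (max clo⁻¹ chi) * ((2*(((ν+2):ℕ):ℝ))^3 * ftilde a f ((ν+2) - 2) *
          (a*κ*Real.exp 1/(2*(((ν+2):ℕ):ℝ)))^(2*(ν+2))) := by rw [hT]
      _ = (max clo⁻¹ chi) * (2*(((ν+2):ℕ):ℝ))^3 * ftilde a f ((ν+2) - 2) *
          (a*κ*Real.exp 1/(2*(((ν+2):ℕ):ℝ)))^(2*(ν+2)) := by ring
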